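/- If X is a complete smooth vector field on a smooth manifold M, then each chart map j_s : M → M_ℝ of the flow completion is surjective, hence an equivariant diffeomorphism (M,X) ≅ (M_ℝ, X_ℝ). -/

import Mathlib

open scoped Manifold Topology
open Set Filter Topology

/-- A maximal local flow of a vector field `v` on a manifold `M`. -/
structure MaxLocalFlow {E : Type*} [NormedAddCommGroup E] [NormedSpace ℝ E]
    {H : Type*} [TopologicalSpace H] (I : ModelWithCorners ℝ E H)
    (M : Type*) [TopologicalSpace M] [ChartedSpace H M]
    (v : (x : M) → TangentSpace I x) where
  domain : Set (ℝ × M)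
  toFun : ℝ → M → M
  isOpen_domain : IsOpen domain
  zero_mem : ∀ x : M, ((0 : ℝ), x) ∈ domain
  map_zero : ∀ x : M, toFun 0 x = x
  continuousOn : ContinuousOn (fun p : ℝ × M => toFun p.1 p.2) domain
  segment_mem : ∀ (x : M) (t : ℝ), (t, x) ∈ domain → ∀ u ∈ Set.uIcc 0 t, (u, x) ∈ domain
  isIntegralCurveOn : ∀ x : M,
    ∀ t ∈ {t | (t, x) ∈ domain}, HasMFDerivAt 𝓘(ℝ, ℝ) I (fun t => toFun t x) t
      ((1 : ℝ →L[ℝ] ℝ).smulRight (v ((fun t => toFun t x) t)))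
  map_add : ∀ (x : M) (s t : ℝ), (s, x) ∈ domain → (t, toFun s x) ∈ domain →
    (s + t, x) ∈ domain ∧ toFun (s + t) x = toFun t (toFun s x)
  map_neg : ∀ (x : M) (t : ℝ), (t, x) ∈ domain →
    (-t, toFun t x) ∈ domain ∧ toFun (-t) (toFun t x) = x
  maximal : ∀ (x : M) (γ : ℝ → M) (a b : ℝ), a < 0 → 0 < b → γ 0 = x →
    (∀ t ∈ Set.Ioo a b, HasMFDerivAt 𝓘(ℝ, ℝ) I γ t ((1 : ℝ →L[ℝ] ℝ).smulRight (v (γ t)))) →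
    ∀ t ∈ Set.Ioo a b, (t, x) ∈ domain ∧ toFun t x = γ t

/-- The vector field `X̄ = ∂ₛ × X` on `ℝ × M`. -/
def barField {E : Type*} [NormedAddCommGroup E] [NormedSpace ℝ E]
    {H : Type*} [TopologicalSpace H] {I : ModelWithCorners ℝ E H}
    {M : Type*} [TopologicalSpace M] [ChartedSpace H M]
    (v : (x : M) → TangentSpace I x) :
    (p : ℝ × M) → TangentSpace ((𝓘(ℝ, ℝ)).prod I) p :=
  fun p => ((1 : ℝ), v p.2)

/-- The orbit relation of a (local) flow: `p ~ q` iff the flow carries `p` to `q`. -/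
def MaxLocalFlow.rel {E : Type*} [NormedAddCommGroup E] [NormedSpace ℝ E]
    {H : Type*} [TopologicalSpace H] {I : ModelWithCorners ℝ E H}
    {M : Type*} [TopologicalSpace M] [ChartedSpace H M]
    {v : (x : M) → TangentSpace I x} (Φ : MaxLocalFlow I M v) : M → M → Prop :=
  fun p q => ∃ t : ℝ, (t, p) ∈ Φ.domain ∧ Φ.toFun t p = q

theorem hasMFDerivAt_prod' {𝕜 : Type*} [NontriviallyNormedField 𝕜]
    {E : Type*} [NormedAddCommGroup E] [NormedSpace 𝕜 E]
    {H : Type*} [TopologicalSpace H] {I : ModelWithCorners 𝕜 E H}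
    {M : Type*} [TopologicalSpace M] [ChartedSpace H M]
    {E' : Type*} [NormedAddCommGroup E'] [NormedSpace 𝕜 E']
    {H' : Type*} [TopologicalSpace H'] {I' : ModelWithCorners 𝕜 E' H'}
    {M' : Type*} [TopologicalSpace M'] [ChartedSpace H' M']
    {E'' : Type*} [NormedAddCommGroup E''] [NormedSpace 𝕜 E'']
    {H'' : Type*} [TopologicalSpace H''] {I'' : ModelWithCorners 𝕜 E'' H''}
    {M'' : Type*} [TopologicalSpace M''] [ChartedSpace H'' M'']
    {f : M → M'} {g : M → M''} {x : M}
    {f' : TangentSpace I x →L[𝕜] TangentSpace I' (f x)}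
    {g' : TangentSpace I x →L[𝕜] TangentSpace I'' (g x)}
    (hf : HasMFDerivAt I I' f x f') (hg : HasMFDerivAt I I'' g x g') :
    HasMFDerivAt I (I'.prod I'') (fun x => (f x, g x)) x (f'.prod g') := by
  have h := (hf.mdifferentiableAt.prodMk hg.mdifferentiableAt).hasMFDerivAt
  rwa [hf.mdifferentiableAt.mfderiv_prod hg.mdifferentiableAt, hf.mfderiv, hg.mfderiv] at h

theorem flow_formula {E : Type*} [NormedAddCommGroup E] [NormedSpace ℝ E]
    {H : Type*} [TopologicalSpace H] {I : ModelWithCorners ℝ E H}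
    {M : Type*} [TopologicalSpace M] [ChartedSpace H M]
    (v : (x : M) → TangentSpace I x)
    (φ : MaxLocalFlow I M v) (hφ : φ.domain = Set.univ)
    (Φ : MaxLocalFlow ((𝓘(ℝ, ℝ)).prod I) (ℝ × M) (barField v)) (s : ℝ) (x : M) (t : ℝ) :
    (t, ((s, x) : ℝ × M)) ∈ Φ.domain ∧ Φ.toFun t (s, x) = (s + t, φ.toFun t x) := by
  set γ : ℝ → ℝ × M := fun u => (s + u, φ.toFun u x) with hγ
  have hic : ∀ t_1 ∈ Set.Ioo (-(|t| + 1)) (|t| + 1), HasMFDerivAt 𝓘(ℝ, ℝ) ((𝓘(ℝ, ℝ)).prod I) γ t_1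
      ((1 : ℝ →L[ℝ] ℝ).smulRight (barField v (γ t_1))) := by
    intro u _
    have h1 : HasMFDerivAt 𝓘(ℝ, ℝ) 𝓘(ℝ, ℝ) (fun u : ℝ => s + u) u
        ((1 : ℝ →L[ℝ] ℝ).smulRight (1 : ℝ)) := by
      have hd : HasFDerivAt (fun u : ℝ => s + u) ((1 : ℝ →L[ℝ] ℝ).smulRight (1 : ℝ)) u :=
        hasDerivAt_iff_hasFDerivAt.mp ((hasDerivAt_id u).const_add s)
      exact hasMFDerivAt_iff_hasFDerivAt.mpr hd
    have h2 : HasMFDerivAt 𝓘(ℝ, ℝ) I (fun u => φ.toFun u x) u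
        ((1 : ℝ →L[ℝ] ℝ).smulRight (v (φ.toFun u x))) :=
      φ.isIntegralCurveOn x u (by rw [Set.mem_setOf_eq, hφ]; trivial)
    exact hasMFDerivAt_prod' h1 h2
  have := Φ.maximal (s, x) γ (-(|t| + 1)) (|t| + 1)
    (neg_lt_zero.mpr (by positivity)) (by positivity)
    (by simp [hγ, φ.map_zero])
    hic t ⟨by nlinarith [abs_nonneg t, neg_abs_le t], by nlinarith [le_abs_self t]⟩
  exact this

/-- If `X` is a complete vector field (its maximal flow is defined everywhere), then
each chart map `j_s : M → M_ℝ` of the flow completion is surjective, hence (being an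
open embedding) an equivariant homeomorphism/diffeomorphism `(M, X) ≅ (M_ℝ, X_ℝ)`. -/
theorem js_surjective_of_complete {E : Type*} [NormedAddCommGroup E] [NormedSpace ℝ E]
    {H : Type*} [TopologicalSpace H] {I : ModelWithCorners ℝ E H}
    {M : Type*} [TopologicalSpace M] [ChartedSpace H M] [IsManifold I (⊤ : ℕ∞) M]
    (v : (x : M) → TangentSpace I x)
    (φ : MaxLocalFlow I M v) (hφ : φ.domain = Set.univ)
    (Φ : MaxLocalFlow ((𝓘(ℝ, ℝ)).prod I) (ℝ × M) (barField v)) (s : ℝ) :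
    Function.Surjective (fun x : M => Quot.mk Φ.rel ((s, x) : ℝ × M)) ∧
    Function.Bijective (fun x : M => Quot.mk Φ.rel ((s, x) : ℝ × M)) ∧
    (∃ h : M ≃ₜ Quot Φ.rel, ∀ x : M, h x = Quot.mk Φ.rel ((s, x) : ℝ × M)) ∧
    -- equivariance: `j_s` intertwines the flow of `X` with the flow induced on `M_ℝ`
    ∀ (t : ℝ) (x : M),
      Quot.mk Φ.rel ((s, φ.toFun t x) : ℝ × M) = Quot.mk Φ.rel ((s - t, x) : ℝ × M) := by
  have hdom : ∀ (t : ℝ) (y : M), (t, y) ∈ φ.domain := by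
    intro t y; rw [hφ]; trivial
  have key := flow_formula v φ hφ Φ
  -- characterization of the relation
  have hrel : ∀ (a : ℝ) (y : M) (b : ℝ) (z : M),
      Φ.rel (a, y) (b, z) ↔ φ.toFun (b - a) y = z := by
    intro a y b z
    constructor
    · rintro ⟨t, -, he⟩
      rw [(key a y t).2] at he
      obtain ⟨h1, h2⟩ := Prod.mk.injEq .. ▸ he
      have : t = b - a := by linarith [h1]
      rw [← this]; exact h2
    · intro h
      refine ⟨b - a, (key a y (b - a)).1, ?_⟩
      rw [(key a y (b - a)).2, h]
      congr 1
      ring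
  have hinv : ∀ (a : ℝ) (y : M), φ.toFun (a - s) (φ.toFun (s - a) y) = y := by
    intro a y
    have := (φ.map_neg y (s - a) (hdom _ _)).2
    rwa [neg_sub] at this
  -- the relation is an equivalence
  have hequiv : Equivalence Φ.rel := by
    constructor
    · intro p; exact ⟨0, Φ.zero_mem p, Φ.map_zero p⟩
    · rintro p q ⟨t, ht, he⟩
      refine ⟨-t, ?_, ?_⟩
      · rw [← he]; exact (Φ.map_neg p t ht).1
      · rw [← he]; exact (Φ.map_neg p t ht).2
    · rintro p q r ⟨t1, h1, e1⟩ ⟨t2, h2, e2⟩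
      have h2' : (t2, Φ.toFun t1 p) ∈ Φ.domain := by rw [e1]; exact h2
      refine ⟨t1 + t2, (Φ.map_add p t1 t2 h1 h2').1, ?_⟩
      rw [(Φ.map_add p t1 t2 h1 h2').2, e1, e2]
  -- surjectivity
  have hsurj : Function.Surjective (fun x : M => Quot.mk Φ.rel ((s, x) : ℝ × M)) := by
    intro q
    induction q using Quot.ind with
    | mk p =>
      obtain ⟨a, y⟩ := p
      refine ⟨φ.toFun (s - a) y, Quot.sound ?_⟩
      exact (hrel s (φ.toFun (s - a) y) a y).mpr (hinv a y)
  -- injectivity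
  have hinj : Function.Injective (fun x : M => Quot.mk Φ.rel ((s, x) : ℝ × M)) := by
    intro x x' h
    have hr : Φ.rel (s, x) (s, x') := hequiv.eqvGen_iff.mp (Quot.eqvGen_exact h)
    have := (hrel s x s x').mp hr
    rwa [sub_self, φ.map_zero] at this
  -- the inverse map
  set g : ℝ × M → M := fun p => φ.toFun (s - p.1) p.2 with hg
  have hgresp : ∀ p q : ℝ × M, Φ.rel p q → g p = g q := by
    rintro ⟨a, y⟩ ⟨b, z⟩ hr
    have hz : φ.toFun (b - a) y = z := (hrel a y b z).mp hr
    have hadd := φ.map_add y (b - a) (s - b) (hdom _ _) (hdom _ _)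
    simp only [hg, hg]
    rw [← hz, ← hadd.2]
    congr 1
    ring
  have hgcont : Continuous g := by
    have h1 : Continuous (fun p : ℝ × M => φ.toFun p.1 p.2) := by
      rw [← continuousOn_univ, ← hφ]; exact φ.continuousOn
    have h2 : Continuous (fun p : ℝ × M => ((s - p.1, p.2) : ℝ × M)) :=
      ((continuous_const.sub continuous_fst).prodMk continuous_snd)
    exact h1.comp h2
  have hleft : ∀ x : M, Quot.lift g hgresp (Quot.mk Φ.rel (s, x)) = x := by
    intro x
    simp only [Quot.lift_mk, hg, sub_self, φ.map_zero]
  have hright : ∀ q : Quot Φ.rel, Quot.mk Φ.rel ((s, Quot.lift g hgresp q) : ℝ × M) = q := by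
    intro q
    induction q using Quot.ind with
    | mk p =>
      obtain ⟨a, y⟩ := p
      exact Quot.sound ((hrel s (g (a, y)) a y).mpr (hinv a y))
  have hhomeo : ∃ h : M ≃ₜ Quot Φ.rel, ∀ x : M, h x = Quot.mk Φ.rel ((s, x) : ℝ × M) := by
    refine ⟨⟨⟨fun x => Quot.mk Φ.rel ((s, x) : ℝ × M), Quot.lift g hgresp, hleft, hright⟩,
      ?_, continuous_quot_lift hgresp hgcont⟩, fun x => rfl⟩
    exact continuous_quot_mk.comp (Continuous.prodMk_right s)
  refine ⟨hsurj, ⟨hinj, hsurj⟩, hhomeo, ?_⟩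
  intro t x
  refine Quot.sound ((hrel s (φ.toFun t x) (s - t) x).mpr ?_)
  have := (φ.map_neg x t (hdom _ _)).2
  rwa [show s - t - s = -t by ring]
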